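/- arXiv:2008.12559 — 3 statements merged into one kernel-verified Lean document; each statement's English description precedes it below -/
import Mathlib

section
/- Let b ≥ 2 be an integer. If N is a b-smooth positive integer (all prime factors of N are at most b) and M is a positive integer with M ≤ N, then there exists a positive divisor p of N satisfying M/√b ≤ p < √b · M. -/
open Real

/-!
Let `d` be the largest divisor of `N` below `√b · M`. If `d < M / √b`, then `d ≠ N`, so some prime
`q ≤ b` divides `N / d`, and `d * q ≤ b * d < √b · M` is a larger divisor below the bound.
-/

theorem Nat.exists_prime_le_mul_dvd_of_dvd_of_ne {N d b : ℕ}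
    (hsmooth : ∀ r : ℕ, r.Prime → r ∣ N → r ≤ b) (hd : d ∣ N) (hdN : d ≠ N) :
    ∃ q : ℕ, q.Prime ∧ q ≤ b ∧ d * q ∣ N := by
  obtain ⟨k, rfl⟩ := hd
  have hk : k ≠ 1 := by rintro rfl; exact hdN (mul_one d).symm
  have hdq : d * k.minFac ∣ d * k := mul_dvd_mul_left d k.minFac_dvd
  exact ⟨k.minFac, Nat.minFac_prime hk,
    hsmooth _ (Nat.minFac_prime hk) ((dvd_mul_left _ _).trans hdq), hdq⟩

theorem Nat.exists_dvd_lt_le_mul_of_smooth {N b : ℕ} (hN : N ≠ 0)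
    (hsmooth : ∀ r : ℕ, r.Prime → r ∣ N → r ≤ b) {y : ℝ} (hy : 1 < y) :
    ∃ d : ℕ, d ∣ N ∧ (d : ℝ) < y ∧ (d = N ∨ y ≤ b * d) := by
  classical
  set S := N.divisors.filter (fun d : ℕ => (d : ℝ) < y)
  have hmem {d : ℕ} : d ∈ S ↔ d ∣ N ∧ (d : ℝ) < y := by simp [S, hN]
  obtain ⟨d, hdS, hmax⟩ := S.exists_max_image id ⟨1, hmem.2 ⟨one_dvd N, by simpa using hy⟩⟩
  obtain ⟨hd, hdy⟩ := hmem.1 hdS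
  refine ⟨d, hd, hdy, or_iff_not_imp_left.2 fun hdN => ?_⟩
  obtain ⟨q, hq, hqb, hdqN⟩ := Nat.exists_prime_le_mul_dvd_of_dvd_of_ne hsmooth hd hdN
  by_contra! hbd
  have hdq_lt : ((d * q : ℕ) : ℝ) < y := by
    have : (q : ℝ) ≤ b := by exact_mod_cast hqb
    push_cast
    nlinarith [d.cast_nonneg (α := ℝ)]
  have hdq_le : d * q ≤ d := hmax _ (hmem.2 ⟨hdqN, hdq_lt⟩)
  have hd0 : 0 < d := Nat.pos_of_dvd_of_pos hd (Nat.pos_of_ne_zero hN)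
  nlinarith [hq.two_le]

theorem smooth_divisor_exists_general (b N M : ℕ) (hb : 2 ≤ b)
    (hsmooth : ∀ r : ℕ, r.Prime → r ∣ N → r ≤ b)
    (hM : 0 < M) (hMN : M ≤ N) :
    ∃ p : ℕ, p ∣ N ∧ 0 < p ∧
      (M : ℝ) / Real.sqrt b ≤ p ∧ (p : ℝ) < Real.sqrt b * M := by
  have hN : N ≠ 0 := by omega
  have hsb : 1 < √(b : ℝ) := by rw [Real.lt_sqrt zero_le_one]; exact_mod_cast hb
  have hM1 : (1 : ℝ) ≤ M := by exact_mod_cast hM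
  obtain ⟨p, hp, hpy, hpN | hyp⟩ :=
    Nat.exists_dvd_lt_le_mul_of_smooth hN hsmooth (y := √b * M) (by nlinarith)
  all_goals refine ⟨p, hp, Nat.pos_of_dvd_of_pos hp (Nat.pos_of_ne_zero hN), ?_, hpy⟩
  · calc (M : ℝ) / √b ≤ M := div_le_self (by positivity) hsb.le
      _ ≤ p := by rw [hpN]; exact_mod_cast hMN
  · rw [div_le_iff₀ (by positivity)]
    have hb0 : (0 : ℝ) < b := by positivity
    have : √(b : ℝ) * √b = b := Real.mul_self_sqrt hb0.le
    nlinarith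

theorem smooth_divisor_exists (b N M : ℕ) (hb : 2 ≤ b) (hN : 0 < N)
    (hsmooth : ∀ r : ℕ, r.Prime → r ∣ N → r ≤ b)
    (hM : 0 < M) (hMN : M ≤ N) :
    ∃ p : ℕ, p ∣ N ∧ 0 < p ∧
      (M : ℝ) / Real.sqrt b ≤ p ∧ (p : ℝ) < Real.sqrt b * M :=
  smooth_divisor_exists_general b N M hb hsmooth hM hMN
end

section
/- Let 1 = p₁ < p₂ < ⋯ < p_d = N be the increasing enumeration of all positive divisors of a b-smooth positive integer N (b ≥ 2). Then for every index i with 1 ≤ i < d, the ratio p_{i+1}/p_i is at most b. -/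
theorem consecutive_divisors_ratio_le (b N : ℕ) (hb : 2 ≤ b) (hN : 0 < N)
    (hsmooth : ∀ r : ℕ, r.Prime → r ∣ N → r ≤ b)
    (d : ℕ) (p : Fin d → ℕ)
    (hmono : StrictMono p)
    (hdvd : ∀ k : Fin d, p k ∣ N ∧ 0 < p k)
    (hall : ∀ m : ℕ, m ∣ N → 0 < m → ∃ k : Fin d, p k = m)
    (i : ℕ) (hi : i + 1 < d) :
    (p ⟨i + 1, hi⟩ : ℝ) / (p ⟨i, Nat.lt_of_succ_lt hi⟩ : ℝ) ≤ b := by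
  set j : Fin d := ⟨i, Nat.lt_of_succ_lt hi⟩
  set j1 : Fin d := ⟨i + 1, hi⟩
  have hjlt : j < j1 := by simp [j, j1, Fin.lt_def]
  have hpj : 0 < p j := (hdvd j).2
  have hq1 : 1 < p j1 := lt_of_le_of_lt hpj (hmono hjlt)
  set q := p j1 with hq
  have hr : q.minFac.Prime := Nat.minFac_prime (by omega)
  have hrN : q.minFac ∣ N := dvd_trans (Nat.minFac_dvd q) (hdvd j1).1
  have hrb : q.minFac ≤ b := hsmooth _ hr hrN
  have hqr_dvd : q / q.minFac ∣ N := dvd_trans (Nat.div_dvd_of_dvd (Nat.minFac_dvd q)) (hdvd j1).1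
  have hqr_pos : 0 < q / q.minFac :=
    Nat.div_pos (Nat.minFac_le (by omega)) hr.pos
  obtain ⟨k, hk⟩ := hall _ hqr_dvd hqr_pos
  have hklt : p k < q := by
    rw [hk]
    exact Nat.div_lt_self (by omega) hr.one_lt
  have hkj : k ≤ j := by
    have : k < j1 := hmono.lt_iff_lt.mp hklt
    have h2 : (k : ℕ) < i + 1 := this
    exact Fin.le_def.mpr (Nat.lt_succ_iff.mp h2)
  have hle : q / q.minFac ≤ p j := hk ▸ hmono.monotone hkj
  have hmain : q ≤ b * p j := by
    calc q = q.minFac * (q / q.minFac) := (Nat.mul_div_cancel' (Nat.minFac_dvd q)).symm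
    _ ≤ b * p j := Nat.mul_le_mul hrb hle
  rw [div_le_iff₀ (by exact_mod_cast hpj)]
  exact_mod_cast hmain
end

section
/- Let N = pq with p, q ≥ 1, let a : {0,…,N−1} → ℂ, let μ ∈ ℤ, M ≥ 0, and ε > 0. Suppose Q : ℝ → ℂ is a function such that |Q(x) − e^{πi x}| ≤ ε for all real x with |x| ≤ M/p. For each integer m, define the estimate ℰ(â)_m = Σ_{k=0}^{p-1} Σ_{l=0}^{q-1} a_{qk+l} · e^{πi v_l μ} · Q(v_l (m − μ)) · e^{-2πi m k/p} · e^{-πi m/p}, where v_l = −2(l − q/2)/N. Then for every integer m with |m − μ| ≤ M, |â_m − ℰ(â)_m| ≤ (Σ_{n=0}^{N-1} |a_n|) · ε, where â_m = Σ_{n=0}^{N-1} a_n e^{-2πi m n/N}. -/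
/-!
Cooley–Tukey factors the phase of `a_{qk+l}` in `â_m` as
`e^{πi v_l μ} · e^{πi v_l (m-μ)} · e^{-2πi mk/p} · e^{-πi m/p}`. The estimate replaces only the
second factor by `Q`, at an argument of size at most `M/p` because `|v_l| ≤ 1/p`; the other
factors are unimodular, so each term is off by at most `|a_{qk+l}| ε`, and the triangle inequality
sums these errors.
-/

open Complex Real

lemma Finset.sum_range_mul_eq_sum_sum {β : Type*} [AddCommMonoid β] (p q : ℕ) (f : ℕ → β) :
    ∑ n ∈ Finset.range (p * q), f n
      = ∑ k ∈ Finset.range p, ∑ l ∈ Finset.range q, f (q * k + l) := by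
  induction p with
  | zero => simp
  | succ p ih => rw [Nat.succ_mul, Finset.sum_range_add, ih, Finset.sum_range_succ, mul_comm p q]

lemma abs_sub_half_le_half {l q : ℕ} (hl : l ≤ q) : |(l : ℝ) - q / 2| ≤ q / 2 := by
  have : (l : ℝ) ≤ q := by exact_mod_cast hl
  rw [abs_le]; constructor <;> linarith [(l.cast_nonneg : (0 : ℝ) ≤ l)]

/-- The frequency `v_l` of the paper, for `N = p * q`. -/
noncomputable def pftFreq (q N l : ℕ) : ℝ := -2 * ((l : ℝ) - q / 2) / N

lemma abs_pftFreq_le {p q l : ℕ} (hl : l ≤ q) : |pftFreq q (p * q) l| ≤ 1 / p := by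
  rcases Nat.eq_zero_or_pos p with rfl | hp
  · simp [pftFreq]
  rcases Nat.eq_zero_or_pos q with rfl | hq
  · simp [pftFreq]
  have hpq : (0 : ℝ) < p * q := by positivity
  rw [pftFreq, abs_div, abs_mul, Nat.cast_mul, abs_of_pos hpq, div_le_div_iff₀ hpq (by positivity)]
  calc |(-2 : ℝ)| * |(l : ℝ) - q / 2| * p ≤ 2 * (q / 2) * p := by
        norm_num; gcongr; exact abs_sub_half_le_half hl
    _ = 1 * (p * q) := by ring

lemma exp_dft_eq_pft_factors {p q : ℕ} (hq : q ≠ 0) (m μ : ℤ) (k l : ℕ) :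
    exp (-2 * π * I * m * ((q * k + l : ℕ) : ℂ) / (p * q : ℕ))
      = exp (π * I * (pftFreq q (p * q) l : ℂ) * μ)
        * exp (π * I * ((pftFreq q (p * q) l * ((m : ℝ) - μ) : ℝ) : ℂ))
        * exp (-2 * π * I * m * k / p) * exp (-π * I * m / p) := by
  rcases Nat.eq_zero_or_pos p with rfl | hp
  · simp [pftFreq]
  simp only [← Complex.exp_add, pftFreq]
  congr 1
  push_cast
  field_simp
  ring

lemma norm_exp_of_re_eq_zero {z : ℂ} (hz : z.re = 0) : ‖exp z‖ = 1 := by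
  rw [Complex.norm_exp, hz, Real.exp_zero]

lemma norm_dft_term_sub_pft_term_le {p q k l : ℕ} (hl : l < q) (a : ℂ) (μ m : ℤ) {M ε : ℝ}
    {Q : ℝ → ℂ} (hQ : ∀ x : ℝ, |x| ≤ M / p → ‖Q x - exp (π * I * x)‖ ≤ ε)
    (hm : |(m : ℝ) - μ| ≤ M) :
    ‖a * exp (-2 * π * I * m * ((q * k + l : ℕ) : ℂ) / (p * q : ℕ))
      - a * exp (π * I * (pftFreq q (p * q) l : ℂ) * μ) * Q (pftFreq q (p * q) l * ((m : ℝ) - μ))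
        * exp (-2 * π * I * m * k / p) * exp (-π * I * m / p)‖ ≤ ‖a‖ * ε := by
  set x := pftFreq q (p * q) l * ((m : ℝ) - μ)
  have hx : |x| ≤ M / p := by
    rw [abs_mul, ← one_div_mul_eq_div]
    exact mul_le_mul (abs_pftFreq_le hl.le) hm (abs_nonneg _) (by positivity)
  rw [exp_dft_eq_pft_factors (by omega : q ≠ 0)]
  calc _ = ‖a‖ * ‖exp (π * I * (pftFreq q (p * q) l : ℂ) * μ)‖ * ‖Q x - exp (π * I * x)‖
          * ‖exp (-2 * π * I * m * k / p)‖ * ‖exp (-π * I * m / p)‖ := by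
        rw [← norm_neg (Q x - _), neg_sub]; simp only [← norm_mul]; congr 1; ring
    _ = ‖a‖ * ‖Q x - exp (π * I * x)‖ := by
        rw [norm_exp_of_re_eq_zero (by simp), norm_exp_of_re_eq_zero (by simp),
          norm_exp_of_re_eq_zero (by simp [Complex.div_re]), mul_one, mul_one, mul_one]
    _ ≤ ‖a‖ * ε := by gcongr; exact hQ x hx

theorem pft_error_bound_general (p q N : ℕ) (hN : N = p * q)
    (a : ℕ → ℂ) (μ : ℤ) (M : ℝ) (ε : ℝ)
    (Q : ℝ → ℂ)
    (hQ : ∀ x : ℝ, |x| ≤ M / p → ‖Q x - Complex.exp (π * I * x)‖ ≤ ε)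
    (m : ℤ) (hm : |(m : ℝ) - μ| ≤ M) :
    ‖((∑ n ∈ Finset.range N, a n * Complex.exp (-2 * π * I * m * n / N)) -
          ∑ k ∈ Finset.range p, ∑ l ∈ Finset.range q,
            a (q * k + l) *
              Complex.exp (π * I * ((-2 * ((l : ℝ) - q / 2) / N : ℝ) : ℂ) * μ) *
              Q ((-2 * ((l : ℝ) - q / 2) / N) * ((m : ℝ) - μ)) *
              Complex.exp (-2 * π * I * m * k / p) *
              Complex.exp (-π * I * m / p))‖ ≤
      (∑ n ∈ Finset.range N, ‖a n‖) * ε := by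
  subst hN
  rw [Finset.sum_range_mul_eq_sum_sum, Finset.sum_range_mul_eq_sum_sum, Finset.sum_mul,
    ← Finset.sum_sub_distrib]
  refine (norm_sum_le _ _).trans (Finset.sum_le_sum fun k _ => ?_)
  rw [Finset.sum_mul, ← Finset.sum_sub_distrib]
  refine (norm_sum_le _ _).trans (Finset.sum_le_sum fun l hl => ?_)
  exact norm_dft_term_sub_pft_term_le (Finset.mem_range.1 hl) (a _) μ m hQ hm

theorem pft_error_bound (p q N : ℕ) (hp : 1 ≤ p) (hq : 1 ≤ q) (hN : N = p * q)
    (a : ℕ → ℂ) (μ : ℤ) (M : ℝ) (hM : 0 ≤ M) (ε : ℝ) (hε : 0 < ε)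
    (Q : ℝ → ℂ)
    (hQ : ∀ x : ℝ, |x| ≤ M / p → ‖Q x - Complex.exp (π * I * x)‖ ≤ ε)
    (m : ℤ) (hm : |(m : ℝ) - μ| ≤ M) :
    ‖((∑ n ∈ Finset.range N, a n * Complex.exp (-2 * π * I * m * n / N)) -
          ∑ k ∈ Finset.range p, ∑ l ∈ Finset.range q,
            a (q * k + l) *
              Complex.exp (π * I * ((-2 * ((l : ℝ) - q / 2) / N : ℝ) : ℂ) * μ) *
              Q ((-2 * ((l : ℝ) - q / 2) / N) * ((m : ℝ) - μ)) *
              Complex.exp (-2 * π * I * m * k / p) *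
              Complex.exp (-π * I * m / p))‖ ≤
      (∑ n ∈ Finset.range N, ‖a n‖) * ε :=
  pft_error_bound_general p q N hN a μ M ε Q hQ m hm
end
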